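/- arXiv:1605.01279 — 4 statements merged into one kernel-verified Lean document; each statement's English description precedes it below -/
import Mathlib

section
/- For all real numbers t > 0, c > 0, α > 0, β > 0, the time-convolution of two one-sided Gaussian kernels evaluates exactly as ∫₀ᵗ (t−s)^{−3/2} s^{−3/2} exp(−α²/(c(t−s))) · exp(−β²/(c s)) ds = (√(cπ)·(α+β)/(αβ)) · t^{−3/2} · exp(−(α+β)²/(c t)). -/
/-!
The substitution `s = t / (1 + w²)` turns the convolution into
`2 t⁻² exp (-(α + β)² / (c t)) ∫₀^∞ (1 + w⁻²) g (w - (α / β) / w) dw` with `g` a centred Gaussian;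
the factor `exp (-(α + β)² / (c t))` comes from completing the square
`α² / w² + β² w² = (β w - α / w)² + 2 α β`.
By Glasser's master theorem, `u ↦ u - k / u` carries `(1 + k / u²) du` on `(0, ∞)` onto `dx` on `ℝ`;
for even `g` the inversion `u ↦ k / u` shows that `∫₀^∞ g (u - k / u) du` and
`∫₀^∞ (k / u²) g (u - k / u) du` agree, so each is half of `∫ g`.
-/

open MeasureTheory Real Set

section Glasser

variable {E : Type*} [NormedAddCommGroup E] [NormedSpace ℝ E] {k : ℝ}

lemma hasDerivAt_sub_div (k : ℝ) {u : ℝ} (hu : u ≠ 0) :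
    HasDerivAt (fun u => u - k / u) (1 + k / u ^ 2) u :=
  ((hasDerivAt_id' u).sub ((hasDerivAt_const u k).div (hasDerivAt_id' u) hu)).congr_deriv
    (by field_simp; ring)

lemma strictMonoOn_sub_div (hk : 0 ≤ k) : StrictMonoOn (fun u => u - k / u) (Ioi 0) :=
  fun u hu v _ huv => by
    have : k / v ≤ k / u := div_le_div_of_nonneg_left hk hu huv.le
    dsimp only; linarith

lemma image_sub_div_Ioi (hk : 0 < k) : (fun u => u - k / u) '' Ioi 0 = univ := by
  refine eq_univ_of_forall fun v => ?_
  -- the positive root of `u² - v u - k`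
  have hd : 0 ≤ v ^ 2 + 4 * k := by positivity
  have hroot : -v < √(v ^ 2 + 4 * k) := by nlinarith [sqrt_nonneg (v ^ 2 + 4 * k), sq_sqrt hd]
  refine ⟨(v + √(v ^ 2 + 4 * k)) / 2, by simp only [mem_Ioi]; linarith, ?_⟩
  have : v + √(v ^ 2 + 4 * k) ≠ 0 := by linarith
  field_simp
  nlinarith [sq_sqrt hd]

lemma integral_Ioi_smul_comp_sub_div (hk : 0 < k) (f : ℝ → E) :
    ∫ u in Ioi 0, (1 + k / u ^ 2) • f (u - k / u) = ∫ x, f x := by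
  have := integral_image_eq_integral_abs_deriv_smul measurableSet_Ioi
    (fun u hu => (hasDerivAt_sub_div k (ne_of_gt hu)).hasDerivWithinAt)
    (strictMonoOn_sub_div hk.le).injOn f
  rw [image_sub_div_Ioi hk, Measure.restrict_univ] at this
  rw [this]
  refine setIntegral_congr_fun measurableSet_Ioi fun u _ => ?_
  rw [abs_of_pos (by positivity)]

lemma integrableOn_Ioi_smul_comp_sub_div (hk : 0 < k) {f : ℝ → E} (hf : Integrable f) :
    IntegrableOn (fun u => (1 + k / u ^ 2) • f (u - k / u)) (Ioi 0) := by
  have := integrableOn_image_iff_integrableOn_abs_deriv_smul measurableSet_Ioi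
    (fun u hu => (hasDerivAt_sub_div k (ne_of_gt hu)).hasDerivWithinAt)
    (strictMonoOn_sub_div hk.le).injOn f
  rw [image_sub_div_Ioi hk, integrableOn_univ] at this
  refine (this.mp hf).congr_fun (fun u _ => ?_) measurableSet_Ioi
  simp only [abs_of_pos (by positivity : 0 < 1 + k / u ^ 2)]

lemma integrableOn_Ioi_comp_sub_div (hk : 0 < k) {f : ℝ → E} (hf : Integrable f) :
    IntegrableOn (fun u => f (u - k / u)) (Ioi 0) := by
  have hbound : ∀ u : ℝ, ‖(1 + k / u ^ 2)⁻¹‖ ≤ 1 := fun u => by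
    rw [norm_inv, Real.norm_of_nonneg (by positivity)]
    exact inv_le_one_of_one_le₀ (le_add_of_nonneg_right (by positivity))
  have hmeas : Measurable fun u : ℝ => (1 + k / u ^ 2)⁻¹ := by fun_prop
  refine IntegrableOn.congr_fun ((integrableOn_Ioi_smul_comp_sub_div hk hf).bdd_smul 1
    hmeas.aestronglyMeasurable (ae_of_all _ hbound)) (fun u _ => ?_) measurableSet_Ioi
  rw [Pi.smul_apply', smul_smul, inv_mul_cancel₀ (by positivity), one_smul]

lemma integral_Ioi_div_sq_smul_comp_div (hk : 0 < k) (f : ℝ → E) :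
    ∫ u in Ioi 0, (k / u ^ 2) • f (k / u) = ∫ u in Ioi 0, f u := by
  have hderiv (u : ℝ) (hu : u ∈ Ioi 0) : HasDerivWithinAt (k / ·) (-(k / u ^ 2)) (Ioi 0) u :=
    (((hasDerivAt_const u k).div (hasDerivAt_id' u) (ne_of_gt hu)).congr_deriv
      (by field_simp; ring)).hasDerivWithinAt
  have hinj : InjOn (k / ·) (Ioi 0) :=
    StrictAntiOn.injOn fun u (hu : 0 < u) _ _ huv => div_lt_div_of_pos_left hk hu huv
  have himage : (k / ·) '' Ioi 0 = Ioi 0 := by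
    refine Subset.antisymm (image_subset_iff.mpr fun u (hu : 0 < u) => div_pos hk hu)
      fun w (hw : 0 < w) => ⟨k / w, div_pos hk hw, ?_⟩
    field_simp
  have := integral_image_eq_integral_abs_deriv_smul measurableSet_Ioi hderiv hinj f
  rw [himage] at this
  rw [this]
  refine setIntegral_congr_fun measurableSet_Ioi fun u (hu : 0 < u) => ?_
  rw [abs_neg, abs_of_pos (by positivity)]

variable {f : ℝ → E}

lemma integral_Ioi_div_sq_smul_comp_sub_div_of_even (hk : 0 < k) (hf : Function.Even f) :
    ∫ u in Ioi 0, (k / u ^ 2) • f (u - k / u) = ∫ u in Ioi 0, f (u - k / u) := by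
  rw [← integral_Ioi_div_sq_smul_comp_div hk (fun u => f (u - k / u))]
  congr! 3 with u
  rw [div_div_cancel₀ hk.ne', ← hf, neg_sub]

lemma integral_Ioi_comp_sub_div_of_even (hk : 0 < k) (hf : Integrable f)
    (hf_even : Function.Even f) :
    ∫ u in Ioi 0, f (u - k / u) = (2 : ℝ)⁻¹ • ∫ x, f x := by
  have hsplit : ∫ u in Ioi 0, (k / u ^ 2) • f (u - k / u)
      = (∫ x, f x) - ∫ u in Ioi 0, f (u - k / u) := by
    rw [← integral_Ioi_smul_comp_sub_div hk, ← integral_sub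
      (integrableOn_Ioi_smul_comp_sub_div hk hf) (integrableOn_Ioi_comp_sub_div hk hf)]
    simp only [add_smul, one_smul, add_sub_cancel_left]
  rw [integral_Ioi_div_sq_smul_comp_sub_div_of_even hk hf_even, eq_sub_iff_add_eq,
    ← two_smul ℝ] at hsplit
  rw [← hsplit, smul_smul, inv_mul_cancel₀ two_ne_zero, one_smul]

lemma integral_Ioi_add_div_sq_smul_comp_sub_div_of_even (hk : 0 < k) (hf : Integrable f)
    (hf_even : Function.Even f) (a b : ℝ) :
    ∫ u in Ioi 0, (a + b / u ^ 2) • f (u - k / u) = ((a + b / k) / 2) • ∫ x, f x := by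
  have hdecomp (u : ℝ) : (a + b / u ^ 2) • f (u - k / u)
      = (a - b / k) • f (u - k / u) + (b / k) • (1 + k / u ^ 2) • f (u - k / u) := by
    rw [smul_smul, ← add_smul]
    congr 1
    field_simp
    ring
  have h₁ : IntegrableOn (fun u => (a - b / k) • f (u - k / u)) (Ioi 0) :=
    (integrableOn_Ioi_comp_sub_div hk hf).smul _
  have h₂ : IntegrableOn (fun u => (b / k) • (1 + k / u ^ 2) • f (u - k / u)) (Ioi 0) :=
    (integrableOn_Ioi_smul_comp_sub_div hk hf).smul _
  simp_rw [hdecomp]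
  rw [integral_add h₁ h₂, integral_smul, integral_smul,
    integral_Ioi_comp_sub_div_of_even hk hf hf_even, integral_Ioi_smul_comp_sub_div hk,
    smul_smul, ← add_smul]
  congr 1
  ring

end Glasser

section Substitution

variable {E : Type*} [NormedAddCommGroup E] [NormedSpace ℝ E] {t : ℝ}

lemma integral_Ioo_zero_eq_integral_Ioi_comp_div_one_add_sq (ht : 0 < t) (f : ℝ → E) :
    ∫ s in Ioo 0 t, f s = ∫ w in Ioi 0, (2 * t * w / (1 + w ^ 2) ^ 2) • f (t / (1 + w ^ 2)) := by
  have hderiv (w : ℝ) (_ : w ∈ Ioi 0) : HasDerivWithinAt (fun w => t / (1 + w ^ 2))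
      (-(2 * t * w / (1 + w ^ 2) ^ 2)) (Ioi 0) w :=
    (((hasDerivAt_const w t).div ((hasDerivAt_pow 2 w).const_add 1)
      (by positivity)).congr_deriv (by field_simp; ring)).hasDerivWithinAt
  have hinj : InjOn (fun w => t / (1 + w ^ 2)) (Ioi 0) :=
    StrictAntiOn.injOn fun w (hw : 0 < w) v _ hwv =>
      div_lt_div_of_pos_left ht (by positivity) (by gcongr)
  have himage : (fun w => t / (1 + w ^ 2)) '' Ioi 0 = Ioo 0 t := by
    refine Subset.antisymm (image_subset_iff.mpr fun w (hw : 0 < w) => ⟨by positivity, ?_⟩)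
      fun s ⟨hs, hst⟩ => ⟨√((t - s) / s), sqrt_pos.mpr (div_pos (by linarith) hs), ?_⟩
    · exact div_lt_self ht (by nlinarith)
    · dsimp only
      rw [sq_sqrt (div_pos (by linarith) hs).le]
      field_simp
      ring
  rw [← himage, integral_image_eq_integral_abs_deriv_smul measurableSet_Ioi hderiv hinj]
  refine setIntegral_congr_fun measurableSet_Ioi fun w (hw : 0 < w) => ?_
  rw [abs_neg, abs_of_pos (by positivity)]

end Substitution

lemma sq_rpow_neg_three_halves {x : ℝ} (hx : 0 ≤ x) : (x ^ 2) ^ (-(3:ℝ)/2) = (x ^ 3)⁻¹ := by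
  rw [← rpow_natCast_mul hx, show ((2:ℕ):ℝ) * (-(3:ℝ)/2) = -(3:ℕ) by norm_num, rpow_neg hx,
    rpow_natCast]

lemma rpow_neg_three_halves {x : ℝ} (hx : 0 ≤ x) : x ^ (-(3:ℝ)/2) = (x * √x)⁻¹ := by
  rw [show x ^ (-(3:ℝ)/2) = (√x ^ 2) ^ (-(3:ℝ)/2) by rw [sq_sqrt hx],
    sq_rpow_neg_three_halves (sqrt_nonneg x), pow_succ, sq_sqrt hx]

lemma convolution_integrand_comp_div_one_add_sq {t c α β w : ℝ} (ht : 0 < t) (hc : c ≠ 0)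
    (hβ : β ≠ 0) (hw : 0 < w) :
    (2 * t * w / (1 + w ^ 2) ^ 2) •
      ((t - t / (1 + w ^ 2)) ^ (-(3:ℝ)/2) * (t / (1 + w ^ 2)) ^ (-(3:ℝ)/2) *
        exp (-α ^ 2 / (c * (t - t / (1 + w ^ 2)))) * exp (-β ^ 2 / (c * (t / (1 + w ^ 2)))))
      = 2 / t ^ 2 * exp (-(α + β) ^ 2 / (c * t)) *
        ((1 + 1 / w ^ 2) • exp (-(β ^ 2 / (c * t)) * (w - α / β / w) ^ 2)) := by
  have hsub : t - t / (1 + w ^ 2) = t * w ^ 2 / (1 + w ^ 2) := by field_simp; ring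
  have hpow : (t - t / (1 + w ^ 2)) ^ (-(3:ℝ)/2) * (t / (1 + w ^ 2)) ^ (-(3:ℝ)/2)
      = ((t * w / (1 + w ^ 2)) ^ 3)⁻¹ := by
    rw [hsub, ← mul_rpow (by positivity) (by positivity),
      show t * w ^ 2 / (1 + w ^ 2) * (t / (1 + w ^ 2)) = (t * w / (1 + w ^ 2)) ^ 2 by ring,
      sq_rpow_neg_three_halves (by positivity)]
  have hexp : exp (-α ^ 2 / (c * (t - t / (1 + w ^ 2)))) * exp (-β ^ 2 / (c * (t / (1 + w ^ 2))))
      = exp (-(α + β) ^ 2 / (c * t)) * exp (-(β ^ 2 / (c * t)) * (w - α / β / w) ^ 2) := by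
    rw [← exp_add, ← exp_add, hsub]
    congr 1
    field_simp
    ring
  rw [smul_eq_mul, smul_eq_mul, mul_assoc (_ * _), hexp, hpow]
  field_simp
  ring

/-- Exact evaluation of the time convolution of two one-sided Gaussian kernels. -/
theorem convolution_of_gaussian_kernels (t c α β : ℝ)
    (ht : 0 < t) (hc : 0 < c) (hα : 0 < α) (hβ : 0 < β) :
    ∫ s in Set.Ioo (0:ℝ) t,
        (t - s) ^ (-(3:ℝ)/2) * s ^ (-(3:ℝ)/2) *
          Real.exp (-α ^ 2 / (c * (t - s))) * Real.exp (-β ^ 2 / (c * s))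
      = Real.sqrt (c * π) * (α + β) / (α * β) * t ^ (-(3:ℝ)/2) *
          Real.exp (-(α + β) ^ 2 / (c * t)) := by
  have hgauss : Integrable fun x => exp (-(β ^ 2 / (c * t)) * x ^ 2) :=
    integrable_exp_neg_mul_sq (by positivity)
  have hgauss_even : Function.Even fun x => exp (-(β ^ 2 / (c * t)) * x ^ 2) :=
    fun x => by simp only [neg_sq]
  rw [integral_Ioo_zero_eq_integral_Ioi_comp_div_one_add_sq ht,
    setIntegral_congr_fun measurableSet_Ioi fun w (hw : 0 < w) =>
      convolution_integrand_comp_div_one_add_sq ht hc.ne' hβ.ne' hw,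
    integral_const_mul, integral_Ioi_add_div_sq_smul_comp_sub_div_of_even (div_pos hα hβ)
      hgauss hgauss_even, integral_gaussian, smul_eq_mul, rpow_neg_three_halves ht.le,
    show π / (β ^ 2 / (c * t)) = c * π * t / β ^ 2 by field_simp,
    sqrt_div' _ (sq_nonneg β), sqrt_sq hβ.le, sqrt_mul (by positivity)]
  field_simp
  exact sq_sqrt ht.le
end

section
/- Let μ̂ > 0 and D > 0 be real numbers, write a = √μ̂, and set κ := 1 − tanh(a)/a, so that the Doi diffusion-limited rate is k̂_D := 4πD κ. Define the radial functions φ_in(r) = (1 − κ) · sinh(a r)/(sinh(a) · r) for r ∈ (0, 1] and φ_out(r) = 1 − κ/r for r ∈ [1, ∞). Then the inner and outer pieces match to first order at the target surface: φ_in(1) = φ_out(1) and φ_in′(1) = φ_out′(1). -/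
open MeasureTheory Real Set Filter
open scoped Topology

/-! At `r = 1` the factor `sinh a` cancels in `φ_in`, so both values equal `1 - κ`. For the slopes,
`φ_in'(1) = (1 - κ)(a cosh a - sinh a) / sinh a` and `φ_out'(1) = κ`; since `1 - κ = tanh a / a`,
the former is `1 - tanh a / a = κ`. -/

theorem Real.hasDerivAt_sinh_mul_div_self (a : ℝ) {r : ℝ} (hr : r ≠ 0) :
    HasDerivAt (fun r => sinh (a * r) / r) ((a * r * cosh (a * r) - sinh (a * r)) / r ^ 2) r := by
  have hnum : HasDerivAt (fun r => sinh (a * r)) (cosh (a * r) * a) r :=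
    (hasDerivAt_sinh (a * r)).comp r ((hasDerivAt_id r).const_mul a |>.congr_deriv (mul_one a))
  exact (hnum.div (hasDerivAt_id' r) hr).congr_deriv (by ring)

theorem hasDerivAt_const_sub_div (c κ : ℝ) {r : ℝ} (hr : r ≠ 0) :
    HasDerivAt (fun r => c - κ / r) (κ / r ^ 2) r :=
  ((hasDerivAt_const r c).sub ((hasDerivAt_const r κ).div (hasDerivAt_id' r) hr)).congr_deriv
    (by ring)

theorem Real.tanh_div_div_sinh_mul_sub_eq_one_sub {a : ℝ} (ha : a ≠ 0) :
    tanh a / a / sinh a * (a * cosh a - sinh a) = 1 - tanh a / a := by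
  have hs : sinh a ≠ 0 := sinh_ne_zero.2 ha
  rw [tanh_eq_sinh_div_cosh]
  field_simp

theorem doi_inner_solution_matching_general (μ : ℝ) (hμ : 0 < μ)
    (a κ : ℝ) (ha : a = Real.sqrt μ) (hκ : κ = 1 - Real.tanh a / a)
    (φin φout : ℝ → ℝ)
    (hin : ∀ r : ℝ, φin r = (1 - κ) * Real.sinh (a * r) / (Real.sinh a * r))
    (hout : ∀ r : ℝ, φout r = 1 - κ / r) :
    φin 1 = φout 1 ∧ deriv φin 1 = deriv φout 1 := by
  have ha0 : a ≠ 0 := ha ▸ (sqrt_pos.2 hμ).ne'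
  have hs : sinh a ≠ 0 := sinh_ne_zero.2 ha0
  have hφin : φin = fun r => (1 - κ) / sinh a * (sinh (a * r) / r) :=
    funext fun r => by rw [hin]; ring
  constructor
  · simp [hin, hout, hs]
  · rw [hφin, funext hout, ((hasDerivAt_sinh_mul_div_self a one_ne_zero).const_mul _).deriv,
      (hasDerivAt_const_sub_div 1 κ one_ne_zero).deriv]
    simp only [mul_one, one_pow, div_one]
    rw [hκ, sub_sub_cancel, tanh_div_div_sinh_mul_sub_eq_one_sub ha0]

/-- The inner and outer radial pieces of the Doi-model inner solution match to first
order at the target surface: with `a = √μ̂`, `κ = 1 - tanh a / a` (so the Doi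
diffusion-limited rate is `k̂_D = 4πDκ`), the functions
`φ_in(r) = (1-κ) sinh(a r)/(sinh a · r)` and `φ_out(r) = 1 - κ/r` satisfy
`φ_in(1) = φ_out(1)` and `φ_in'(1) = φ_out'(1)`. -/
theorem doi_inner_solution_matching (μ D : ℝ) (hμ : 0 < μ) (hD : 0 < D)
    (a κ kD : ℝ) (ha : a = Real.sqrt μ) (hκ : κ = 1 - Real.tanh a / a)
    (hkD : kD = 4 * π * D * κ)
    (φin φout : ℝ → ℝ)
    (hin : ∀ r : ℝ, φin r = (1 - κ) * Real.sinh (a * r) / (Real.sinh a * r))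
    (hout : ∀ r : ℝ, φout r = 1 - κ / r) :
    φin 1 = φout 1 ∧ deriv φin 1 = deriv φout 1 :=
  doi_inner_solution_matching_general μ hμ a κ ha hκ φin φout hin hout
end

section
/- Let Ω ⊂ ℝ³ be a measurable set of finite positive Lebesgue measure |Ω|, let b ∈ Ω, let r ∈ Ω, and let G : Ω × Ω × (0, ∞) → ℝ be a measurable nonnegative function satisfying: (conservation) ∫_Ω G(x, x′, t) dx′ = 1 for all x ∈ Ω, t > 0; (semigroup/Chapman–Kolmogorov property) ∫_Ω G(r, x′, t) G(x′, b, s) dx′ = G(r, b, t + s) for all t, s > 0; and the integrability conditions that s ↦ G(x, b, s) − 1/|Ω| is Lebesgue integrable on (0, ∞) for x = r and for almost every x ∈ Ω, and that (x′, s) ↦ G(r, x′, t)·|G(x′, b, s) − 1/|Ω|| is integrable on Ω × (0, ∞). Define U(x, b) := ∫₀^∞ (G(x, b, s) − 1/|Ω|) ds. Then for every t > 0, ∫_Ω G(r, x′, t) U(x′, b) dx′ = U(r, b) − ∫₀ᵗ G(r, b, s) ds + t/|Ω|. -/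
open MeasureTheory Real Set Filter

/-!
Insert `U` into the `x'`-integral and exchange the order of integration (Fubini). For each
`s > 0`, conservation turns `∫ G(r,x',t) (G(x',b,s) - 1/|Ω|) dx'` into
`∫ G(r,x',t) G(x',b,s) dx' - 1/|Ω|`, and the semigroup property into `G(r,b,t+s) - 1/|Ω|`.
The remaining `s`-integral is `∫ₜ^∞ (G(r,b,s) - 1/|Ω|) ds`, which is `U(r)` minus the
integral of the same function over `(0,t]`.
-/

section Kernel

variable {X Y : Type*} [MeasurableSpace X] [MeasurableSpace Y]
  {μ : Measure X} {ν : Measure Y}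

theorem integral_mul_sub_const_of_integral_eq_one {k f : X → ℝ} {c : ℝ}
    (hk : ∫ x, k x ∂μ = 1) (hkf : Integrable (fun x => k x * (f x - c)) μ) :
    ∫ x, k x * (f x - c) ∂μ = (∫ x, k x * f x ∂μ) - c := by
  have hk_int : Integrable k μ := Integrable.of_integral_ne_zero (by rw [hk]; exact one_ne_zero)
  have hkc : Integrable (fun x => k x * c) μ := hk_int.mul_const c
  have hkf' : Integrable (fun x => k x * f x) μ :=
    (hkf.add hkc).congr (Eventually.of_forall fun x => by simp only [Pi.add_apply]; ring)
  simp_rw [mul_sub]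
  rw [integral_sub hkf' hkc, integral_mul_const, hk, one_mul]

theorem integral_mul_integral_sub_const_of_integral_eq_one [SFinite μ] [SFinite ν]
    {k : X → ℝ} {f : X → Y → ℝ} {c : ℝ} (hk : ∫ x, k x ∂μ = 1)
    (hF : Integrable (fun q : X × Y => k q.1 * (f q.1 q.2 - c)) (μ.prod ν)) :
    ∫ x, k x * ∫ y, (f x y - c) ∂ν ∂μ = ∫ y, ((∫ x, k x * f x y ∂μ) - c) ∂ν := by
  simp_rw [← integral_const_mul]
  rw [integral_integral_swap hF]
  refine integral_congr_ae ?_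
  filter_upwards [hF.prod_left_ae] with y hy
  exact integral_mul_sub_const_of_integral_eq_one hk hy

end Kernel

theorem setIntegral_Ioi_comp_const_add {E : Type*} [NormedAddCommGroup E] [NormedSpace ℝ E]
    (f : ℝ → E) (t : ℝ) : ∫ s in Ioi 0, f (t + s) = ∫ s in Ioi t, f s := by
  have h := (measurePreserving_add_left volume t).setIntegral_preimage_emb
    (measurableEmbedding_addLeft t) f (Ioi t)
  rwa [preimage_const_add_Ioi, sub_self] at h

theorem setIntegral_Ioi_comp_const_add_sub_const {g : ℝ → ℝ} {c t : ℝ} (ht : 0 ≤ t)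
    (hg : IntegrableOn (fun s => g s - c) (Ioi 0)) :
    ∫ s in Ioi 0, (g (t + s) - c)
      = (∫ s in Ioi 0, (g s - c)) - (∫ s in Ioc 0 t, g s) + t * c := by
  have hg_Ioc : IntervalIntegrable g volume 0 t :=
    (intervalIntegrable_iff_integrableOn_Ioc_of_le ht).2 <|
      ((hg.mono_set Ioc_subset_Ioi_self).add (integrableOn_const (by simp))).congr
        (Eventually.of_forall fun s => by simp only [Pi.add_apply]; ring)
  have hsplit := intervalIntegral.integral_Ioi_sub_Ioi hg ht
  rw [intervalIntegral.integral_sub hg_Ioc intervalIntegrable_const, intervalIntegral.integral_const,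
    intervalIntegral.integral_of_le ht, smul_eq_mul, sub_zero] at hsplit
  rw [setIntegral_Ioi_comp_const_add (fun s => g s - c) t]
  linarith

theorem kernel_integral_of_pseudo_greens_function_general
    (Ω : Set (EuclideanSpace ℝ (Fin 3)))
    (b r : EuclideanSpace ℝ (Fin 3)) (hr : r ∈ Ω)
    (G : EuclideanSpace ℝ (Fin 3) → EuclideanSpace ℝ (Fin 3) → ℝ → ℝ)
    (hGmeas : Measurable fun q : (EuclideanSpace ℝ (Fin 3)) × (EuclideanSpace ℝ (Fin 3)) × ℝ =>
      G q.1 q.2.1 q.2.2)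
    (hGnonneg : ∀ (x x' : EuclideanSpace ℝ (Fin 3)) (t : ℝ), 0 < t → 0 ≤ G x x' t)
    (hcons : ∀ x ∈ Ω, ∀ t : ℝ, 0 < t → ∫ x' in Ω, G x x' t = 1)
    (hsemi : ∀ t s : ℝ, 0 < t → 0 < s →
      ∫ x' in Ω, G r x' t * G x' b s = G r b (t + s))
    (hint_r : MeasureTheory.IntegrableOn
      (fun s : ℝ => G r b s - 1 / (volume Ω).toReal) (Set.Ioi 0))
    (hint2 : ∀ t : ℝ, 0 < t → MeasureTheory.Integrable
      (fun q : (EuclideanSpace ℝ (Fin 3)) × ℝ =>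
        G r q.1 t * |G q.1 b q.2 - 1 / (volume Ω).toReal|)
      ((volume.restrict Ω).prod (volume.restrict (Set.Ioi 0))))
    (U : EuclideanSpace ℝ (Fin 3) → ℝ)
    (hU : ∀ x : EuclideanSpace ℝ (Fin 3),
      U x = ∫ s in Set.Ioi (0:ℝ), (G x b s - 1 / (volume Ω).toReal)) :
    ∀ t : ℝ, 0 < t →
      ∫ x' in Ω, G r x' t * U x'
        = U r - (∫ s in Set.Ioc (0:ℝ) t, G r b s) + t / (volume Ω).toReal := by
  intro t ht
  have hF : Integrable (fun q : (EuclideanSpace ℝ (Fin 3)) × ℝ =>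
      G r q.1 t * (G q.1 b q.2 - 1 / (volume Ω).toReal))
      ((volume.restrict Ω).prod (volume.restrict (Ioi 0))) := by
    refine (hint2 t ht).mono' (Measurable.aestronglyMeasurable (by fun_prop)) ?_
    filter_upwards with q
    rw [norm_mul, norm_of_nonneg (hGnonneg r q.1 t ht), Real.norm_eq_abs]
  calc ∫ x' in Ω, G r x' t * U x'
      = ∫ s in Ioi 0, ((∫ x' in Ω, G r x' t * G x' b s) - 1 / (volume Ω).toReal) := by
        simp_rw [hU]
        exact integral_mul_integral_sub_const_of_integral_eq_one (hcons r hr t ht) hF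
    _ = ∫ s in Ioi 0, (G r b (t + s) - 1 / (volume Ω).toReal) :=
        setIntegral_congr_fun measurableSet_Ioi fun s hs => by rw [hsemi t s ht hs]
    _ = U r - (∫ s in Ioc 0 t, G r b s) + t / (volume Ω).toReal := by
        rw [setIntegral_Ioi_comp_const_add_sub_const ht.le hint_r, hU r, mul_one_div]

/-- For a nonnegative kernel `G` on `Ω` that conserves probability and satisfies the
semigroup (Chapman–Kolmogorov) property, the pseudo-Green's function
`U(x) = ∫₀^∞ (G(x,b,s) - 1/|Ω|) ds` satisfies
`∫_Ω G(r,x',t) U(x') dx' = U(r) - ∫₀ᵗ G(r,b,s) ds + t/|Ω|`. -/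
theorem kernel_integral_of_pseudo_greens_function
    (Ω : Set (EuclideanSpace ℝ (Fin 3))) (hΩm : MeasurableSet Ω)
    (hΩ0 : 0 < volume Ω) (hΩfin : volume Ω < ⊤)
    (b r : EuclideanSpace ℝ (Fin 3)) (hb : b ∈ Ω) (hr : r ∈ Ω)
    (G : EuclideanSpace ℝ (Fin 3) → EuclideanSpace ℝ (Fin 3) → ℝ → ℝ)
    (hGmeas : Measurable fun q : (EuclideanSpace ℝ (Fin 3)) × (EuclideanSpace ℝ (Fin 3)) × ℝ =>
      G q.1 q.2.1 q.2.2)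
    (hGnonneg : ∀ (x x' : EuclideanSpace ℝ (Fin 3)) (t : ℝ), 0 < t → 0 ≤ G x x' t)
    (hcons : ∀ x ∈ Ω, ∀ t : ℝ, 0 < t → ∫ x' in Ω, G x x' t = 1)
    (hsemi : ∀ t s : ℝ, 0 < t → 0 < s →
      ∫ x' in Ω, G r x' t * G x' b s = G r b (t + s))
    (hint_r : MeasureTheory.IntegrableOn
      (fun s : ℝ => G r b s - 1 / (volume Ω).toReal) (Set.Ioi 0))
    (hint_ae : ∀ᵐ x ∂(volume.restrict Ω), MeasureTheory.IntegrableOn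
      (fun s : ℝ => G x b s - 1 / (volume Ω).toReal) (Set.Ioi 0))
    (hint2 : ∀ t : ℝ, 0 < t → MeasureTheory.Integrable
      (fun q : (EuclideanSpace ℝ (Fin 3)) × ℝ =>
        G r q.1 t * |G q.1 b q.2 - 1 / (volume Ω).toReal|)
      ((volume.restrict Ω).prod (volume.restrict (Set.Ioi 0))))
    (U : EuclideanSpace ℝ (Fin 3) → ℝ)
    (hU : ∀ x : EuclideanSpace ℝ (Fin 3),
      U x = ∫ s in Set.Ioi (0:ℝ), (G x b s - 1 / (volume Ω).toReal)) :
    ∀ t : ℝ, 0 < t →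
      ∫ x' in Ω, G r x' t * U x'
        = U r - (∫ s in Set.Ioc (0:ℝ) t, G r b s) + t / (volume Ω).toReal :=
  kernel_integral_of_pseudo_greens_function_general Ω b r hr G hGmeas hGnonneg hcons hsemi hint_r
    hint2 U hU
end

section
/- Let Ω ⊂ ℝ³ be a bounded measurable set, Ω_ε ⊂ Ω a measurable subset, and r, r₀ ∈ Ω points whose Euclidean distance to every point of Ω_ε is greater than C, for a constant C > 0. Let c₁, c₂, μ > 0 be real numbers, let G : Ω × Ω × (0, ∞) → ℝ be a measurable nonnegative function satisfying the Gaussian bound G(x, y, s) ≤ c₁ s^{−3/2} exp(−‖x − y‖²/(c₂ s)) for all x, y ∈ Ω and s ∈ (0, 1], and let p : Ω × (0, ∞) → ℝ be measurable with 0 ≤ p(y, s) ≤ G(y, r₀, s) for all y ∈ Ω, s > 0. Define v(r, t) := μ ∫₀ᵗ ∫_{Ω_ε} G(r, y, t − s) p(y, s) dy ds. Then for every t with 0 < t ≤ min(1, 2C²/(3c₂)), one has 0 ≤ v(r, t) ≤ μ · |Ω_ε| · t · (c₁ t^{−3/2} exp(−C²/(c₂ t)))², where |Ω_ε| is the Lebesgue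 measure of Ω_ε. -/
open MeasureTheory Real Set

/-!
On `Ωε` both factors of the integrand are Gaussian kernels evaluated at distance greater than
`C`, so each is at most `c₁ u^{-3/2} e^{-C²/(c₂ u)}` at its time argument `u ∈ (0, t)`. This
profile is increasing in `u` as long as `u ≤ 2C²/(3c₂)`, hence both factors are bounded by its
value at `u = t`, and integrating the squared bound over `Ωε × (0, t)` gives the estimate.
-/

noncomputable def gaussianHeatBound (c₁ c₂ d s : ℝ) : ℝ :=
  c₁ * s ^ (-(3:ℝ)/2) * exp (-d ^ 2 / (c₂ * s))

theorem rpow_neg_mul_exp_neg_div_le {a A s t : ℝ} (ha : 0 ≤ a) (hs : 0 < s) (hst : s ≤ t)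
    (hA : a * t ≤ A) : s ^ (-a) * exp (-A / s) ≤ t ^ (-a) * exp (-A / t) := by
  have ht : 0 < t := hs.trans_le hst
  rw [rpow_def_of_pos hs, rpow_def_of_pos ht, ← exp_add, ← exp_add, exp_le_exp]
  have hlog : log t - log s ≤ (t - s) / s := by
    have := log_le_sub_one_of_pos (div_pos ht hs)
    rwa [log_div ht.ne' hs.ne', div_sub_one hs.ne'] at this
  have key : a * (log t - log s) ≤ A / s - A / t := by
    calc a * (log t - log s) ≤ a * ((t - s) / s) := mul_le_mul_of_nonneg_left hlog ha
      _ = a * t * ((t - s) / (s * t)) := by field_simp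
      _ ≤ A * ((t - s) / (s * t)) :=
          mul_le_mul_of_nonneg_right hA (div_nonneg (sub_nonneg.2 hst) (by positivity))
      _ = A / s - A / t := by field_simp
  rw [neg_div, neg_div]
  linarith

theorem gaussianHeatBound_le_of_le {c₁ c₂ C d u t : ℝ} (hc₁ : 0 ≤ c₁) (hc₂ : 0 < c₂)
    (hCd : C ^ 2 ≤ d ^ 2) (hu : 0 < u) (hut : u ≤ t) (ht : 3 * c₂ * t ≤ 2 * C ^ 2) :
    gaussianHeatBound c₁ c₂ d u ≤ gaussianHeatBound c₁ c₂ C t := by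
  have htime : u ^ (-(3:ℝ)/2) * exp (-(C ^ 2 / c₂) / u)
      ≤ t ^ (-(3:ℝ)/2) * exp (-(C ^ 2 / c₂) / t) := by
    rw [neg_div]
    refine rpow_neg_mul_exp_neg_div_le (by norm_num) hu hut ?_
    rw [le_div_iff₀ hc₂]
    linarith
  have hdiv : ∀ w, -C ^ 2 / (c₂ * w) = -(C ^ 2 / c₂) / w := fun w => by ring
  unfold gaussianHeatBound
  calc c₁ * u ^ (-(3:ℝ)/2) * exp (-d ^ 2 / (c₂ * u))
      ≤ c₁ * u ^ (-(3:ℝ)/2) * exp (-C ^ 2 / (c₂ * u)) := by gcongr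
    _ ≤ c₁ * t ^ (-(3:ℝ)/2) * exp (-C ^ 2 / (c₂ * t)) := by
      rw [hdiv, hdiv, mul_assoc, mul_assoc]
      exact mul_le_mul_of_nonneg_left htime hc₁

theorem setIntegral_mem_Icc_of_forall_mem_Icc {X : Type*} [MeasurableSpace X] {μ : Measure X}
    {s : Set X} {f : X → ℝ} {M : ℝ} (hs : MeasurableSet s) (hμs : μ s < ⊤)
    (hf : ∀ x ∈ s, f x ∈ Icc 0 M) : ∫ x in s, f x ∂μ ∈ Icc 0 (M * μ.real s) := by
  have hnorm : ∀ x ∈ s, ‖f x‖ ≤ M := fun x hx => by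
    rw [norm_of_nonneg (hf x hx).1]
    exact (hf x hx).2
  have hnonneg : 0 ≤ ∫ x in s, f x ∂μ := setIntegral_nonneg hs fun x hx => (hf x hx).1
  refine ⟨hnonneg, ?_⟩
  simpa only [norm_of_nonneg hnonneg] using norm_setIntegral_le_of_norm_le_const hμs hnorm

theorem duhamel_short_time_bound_general
    (Ω Ωε : Set (EuclideanSpace ℝ (Fin 3)))
    (hΩb : Bornology.IsBounded Ω)
    (hΩεm : MeasurableSet Ωε) (hsub : Ωε ⊆ Ω)
    (r r₀ : EuclideanSpace ℝ (Fin 3)) (hr : r ∈ Ω) (hr₀ : r₀ ∈ Ω)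
    (C : ℝ) (hC : 0 < C)
    (hdist : ∀ y ∈ Ωε, C < dist r y ∧ C < dist r₀ y)
    (c₁ c₂ μ : ℝ) (hc₁ : 0 < c₁) (hc₂ : 0 < c₂) (hμ : 0 < μ)
    (G : EuclideanSpace ℝ (Fin 3) → EuclideanSpace ℝ (Fin 3) → ℝ → ℝ)
    (hGnonneg : ∀ (x y : EuclideanSpace ℝ (Fin 3)) (s : ℝ), 0 < s → 0 ≤ G x y s)
    (hGbound : ∀ x ∈ Ω, ∀ y ∈ Ω, ∀ s : ℝ, 0 < s → s ≤ 1 →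
      G x y s ≤ c₁ * s ^ (-(3:ℝ)/2) * Real.exp (-dist x y ^ 2 / (c₂ * s)))
    (p : EuclideanSpace ℝ (Fin 3) → ℝ → ℝ)
    (hp : ∀ y ∈ Ω, ∀ s : ℝ, 0 < s → 0 ≤ p y s ∧ p y s ≤ G y r₀ s)
    (t : ℝ) (ht : 0 < t) (ht1 : t ≤ min 1 (2 * C ^ 2 / (3 * c₂))) :
    0 ≤ μ * (∫ s in Set.Ioo (0:ℝ) t, ∫ y in Ωε, G r y (t - s) * p y s) ∧
    μ * (∫ s in Set.Ioo (0:ℝ) t, ∫ y in Ωε, G r y (t - s) * p y s)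
      ≤ μ * (volume Ωε).toReal * t *
          (c₁ * t ^ (-(3:ℝ)/2) * Real.exp (-C ^ 2 / (c₂ * t))) ^ 2 := by
  set K := gaussianHeatBound c₁ c₂ C t
  have htC : 3 * c₂ * t ≤ 2 * C ^ 2 := by
    have := ht1.trans (min_le_right _ _)
    rw [le_div_iff₀ (by positivity)] at this
    linarith
  have hGK : ∀ x ∈ Ω, ∀ y ∈ Ω, C < dist x y → ∀ u, 0 < u → u ≤ t → G x y u ≤ K :=
    fun x hx y hy hxy u hu hut =>
      (hGbound x hx y hy u hu (hut.trans (ht1.trans (min_le_left _ _)))).trans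
        (gaussianHeatBound_le_of_le hc₁.le hc₂ (pow_le_pow_left₀ hC.le hxy.le 2) hu hut htC)
  have hK : 0 ≤ K := by unfold K gaussianHeatBound; positivity
  have hintegrand : ∀ s ∈ Ioo 0 t, ∀ y ∈ Ωε, G r y (t - s) * p y s ∈ Icc 0 (K * K) := by
    intro s ⟨hs0, hst⟩ y hy
    have hpy := hp y (hsub hy) s hs0
    refine ⟨mul_nonneg (hGnonneg r y _ (sub_pos.2 hst)) hpy.1, mul_le_mul ?_ ?_ hpy.1 hK⟩
    · exact hGK r hr y (hsub hy) (hdist y hy).1 _ (sub_pos.2 hst) (by linarith)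
    · exact hpy.2.trans <| hGK y (hsub hy) r₀ hr₀ (dist_comm r₀ y ▸ (hdist y hy).2) s hs0 hst.le
  have hΩε : volume Ωε < ⊤ := (hΩb.subset hsub).measure_lt_top
  have hinner := fun s hs => setIntegral_mem_Icc_of_forall_mem_Icc hΩεm hΩε (hintegrand s hs)
  have houter := setIntegral_mem_Icc_of_forall_mem_Icc measurableSet_Ioo (μ := volume)
    measure_Ioo_lt_top hinner
  rw [volume_real_Ioo_of_le ht.le, sub_zero] at houter
  refine ⟨mul_nonneg hμ.le houter.1, ?_⟩
  calc μ * (∫ s in Ioo 0 t, ∫ y in Ωε, G r y (t - s) * p y s)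
      ≤ μ * (K * K * volume.real Ωε * t) := mul_le_mul_of_nonneg_left houter.2 hμ.le
    _ = μ * (volume Ωε).toReal * t * K ^ 2 := by rw [measureReal_def]; ring

/-- Duhamel-type error bound in the short-time correctness proof: if `G` satisfies a
Gaussian upper bound, `0 ≤ p ≤ G(·, r₀, ·)`, and `r, r₀` are at distance greater
than `C` from the target region `Ωε`, then for short times
`v(r,t) = μ ∫₀ᵗ ∫_{Ωε} G(r,y,t-s) p(y,s) dy ds` satisfies
`0 ≤ v(r,t) ≤ μ |Ωε| t (c₁ t^{-3/2} e^{-C²/(c₂ t)})²`. -/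
theorem duhamel_short_time_bound
    (Ω Ωε : Set (EuclideanSpace ℝ (Fin 3)))
    (hΩm : MeasurableSet Ω) (hΩb : Bornology.IsBounded Ω)
    (hΩεm : MeasurableSet Ωε) (hsub : Ωε ⊆ Ω)
    (r r₀ : EuclideanSpace ℝ (Fin 3)) (hr : r ∈ Ω) (hr₀ : r₀ ∈ Ω)
    (C : ℝ) (hC : 0 < C)
    (hdist : ∀ y ∈ Ωε, C < dist r y ∧ C < dist r₀ y)
    (c₁ c₂ μ : ℝ) (hc₁ : 0 < c₁) (hc₂ : 0 < c₂) (hμ : 0 < μ)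
    (G : EuclideanSpace ℝ (Fin 3) → EuclideanSpace ℝ (Fin 3) → ℝ → ℝ)
    (hGmeas : Measurable fun q : (EuclideanSpace ℝ (Fin 3)) × (EuclideanSpace ℝ (Fin 3)) × ℝ =>
      G q.1 q.2.1 q.2.2)
    (hGnonneg : ∀ (x y : EuclideanSpace ℝ (Fin 3)) (s : ℝ), 0 < s → 0 ≤ G x y s)
    (hGbound : ∀ x ∈ Ω, ∀ y ∈ Ω, ∀ s : ℝ, 0 < s → s ≤ 1 →
      G x y s ≤ c₁ * s ^ (-(3:ℝ)/2) * Real.exp (-dist x y ^ 2 / (c₂ * s)))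
    (p : EuclideanSpace ℝ (Fin 3) → ℝ → ℝ)
    (hpmeas : Measurable fun q : (EuclideanSpace ℝ (Fin 3)) × ℝ => p q.1 q.2)
    (hp : ∀ y ∈ Ω, ∀ s : ℝ, 0 < s → 0 ≤ p y s ∧ p y s ≤ G y r₀ s)
    (t : ℝ) (ht : 0 < t) (ht1 : t ≤ min 1 (2 * C ^ 2 / (3 * c₂))) :
    0 ≤ μ * (∫ s in Set.Ioo (0:ℝ) t, ∫ y in Ωε, G r y (t - s) * p y s) ∧
    μ * (∫ s in Set.Ioo (0:ℝ) t, ∫ y in Ωε, G r y (t - s) * p y s)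
      ≤ μ * (volume Ωε).toReal * t *
          (c₁ * t ^ (-(3:ℝ)/2) * Real.exp (-C ^ 2 / (c₂ * t))) ^ 2 :=
  duhamel_short_time_bound_general Ω Ωε hΩb hΩεm hsub r r₀ hr hr₀ C hC hdist c₁ c₂ μ hc₁ hc₂ hμ G
    hGnonneg hGbound p hp t ht ht1
end
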